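/- Let Γ = Γ_{1/2} be the Clayton Pareto–Lévy copula with parameter θ = 1/2, i.e. Γ(u₁,u₂) = (√u₁ + √u₂)^{−2} on (0,∞)², and let K be the asymptotic covariance kernel built from Γ. Then for all x ≥ y > 0, K((x,x),(y,y)) = (7/32)·(1/x − (√x + √y)^{−2}). -/

import Mathlib

/-! On the diagonal the Clayton copula with `θ = 1/2` is homogeneous of degree `-1`:
`Γ(x, x) = 1/(4x)` and `x² ∂ᵢΓ(x, x) = -1/8`. Substituting these values turns the nine terms
of the kernel into `7/(32x)` from the terms without an off-diagonal factor and `-(7/32) Γ(x, y)`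
from the others. -/

/-- The Clayton Pareto–Lévy copula with parameter `θ = 1/2`:
`Γ(u₁,u₂) = (√u₁ + √u₂)^(−2)` on `(0,∞)²`. -/
noncomputable def claytonHalf (x y : ℝ) : ℝ := ((Real.sqrt x + Real.sqrt y) ^ 2)⁻¹

/-- First partial derivative of `claytonHalf`. -/
noncomputable def claytonHalfD₁ (x y : ℝ) : ℝ := deriv (fun t : ℝ => claytonHalf t y) x

/-- Second partial derivative of `claytonHalf`. -/
noncomputable def claytonHalfD₂ (x y : ℝ) : ℝ := deriv (fun t : ℝ => claytonHalf x t) y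

/-- The asymptotic covariance kernel of the empirical Pareto–Lévy copula process,
built from a function `g` on `(0,∞)²` together with its partial derivatives `D₁, D₂`. -/
noncomputable def plcKernel (g D₁ D₂ : ℝ → ℝ → ℝ) (u v : ℝ × ℝ) : ℝ :=
  g (max u.1 v.1) (max u.2 v.2)
    + u.1 ^ 2 * D₁ u.1 u.2 * g (max u.1 v.1) v.2
    + u.2 ^ 2 * D₂ u.1 u.2 * g v.1 (max u.2 v.2)
    + v.1 ^ 2 * D₁ v.1 v.2 * g (max u.1 v.1) u.2
    + v.2 ^ 2 * D₂ v.1 v.2 * g u.1 (max u.2 v.2)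
    + u.1 ^ 2 * v.1 ^ 2 * D₁ u.1 u.2 * D₁ v.1 v.2 / max u.1 v.1
    + u.1 ^ 2 * v.2 ^ 2 * D₁ u.1 u.2 * D₂ v.1 v.2 * g u.1 v.2
    + u.2 ^ 2 * v.1 ^ 2 * D₂ u.1 u.2 * D₁ v.1 v.2 * g v.1 u.2
    + u.2 ^ 2 * v.2 ^ 2 * D₂ u.1 u.2 * D₂ v.1 v.2 / max u.2 v.2

open Real

theorem hasDerivAt_inv_sq_sqrt_add_const {c x : ℝ} (hc : 0 ≤ c) (hx : 0 < x) :
    HasDerivAt (fun t : ℝ => ((√t + c) ^ 2)⁻¹) (-(√x * (√x + c) ^ 3)⁻¹) x := by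
  have hsx : 0 < √x := sqrt_pos.mpr hx
  refine ((((hasDerivAt_sqrt hx.ne').add_const c).pow 2).inv
    (by positivity : (√x + c) ^ 2 ≠ 0)).congr_deriv ?_
  simp only [Pi.pow_apply]
  field_simp
  ring

theorem claytonHalf_comm (x y : ℝ) : claytonHalf x y = claytonHalf y x := by
  rw [claytonHalf, claytonHalf, add_comm]

theorem claytonHalf_self {x : ℝ} (hx : 0 ≤ x) : claytonHalf x x = (4 * x)⁻¹ := by
  rw [claytonHalf, ← two_mul, mul_pow, sq_sqrt hx]
  norm_num

theorem claytonHalfD₁_eq {x : ℝ} (hx : 0 < x) (y : ℝ) :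
    claytonHalfD₁ x y = -(√x * (√x + √y) ^ 3)⁻¹ :=
  (hasDerivAt_inv_sq_sqrt_add_const (sqrt_nonneg y) hx).deriv

theorem claytonHalfD₂_eq_claytonHalfD₁ (x y : ℝ) : claytonHalfD₂ x y = claytonHalfD₁ y x := by
  simp only [claytonHalfD₂, claytonHalfD₁, claytonHalf_comm x]

theorem claytonHalfD₁_self {x : ℝ} (hx : 0 < x) : claytonHalfD₁ x x = -(8 * x ^ 2)⁻¹ := by
  have hsx : √x * (√x + √x) ^ 3 = 8 * x ^ 2 := by
    rw [← sq_sqrt hx.le, sqrt_sq (sqrt_nonneg x)]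
    ring
  rw [claytonHalfD₁_eq hx, hsx]

/-- For the Clayton Pareto–Lévy copula with `θ = 1/2`, the asymptotic covariance kernel
satisfies `K((x,x),(y,y)) = (7/32)·(1/x − (√x + √y)^(−2))` for all `x ≥ y > 0`. -/
theorem claytonHalf_diagonal_covariance (x y : ℝ) (hy : 0 < y) (hxy : y ≤ x) :
    plcKernel claytonHalf claytonHalfD₁ claytonHalfD₂ (x, x) (y, y)
      = (7 / 32) * (1 / x - ((Real.sqrt x + Real.sqrt y) ^ 2)⁻¹) := by
  have hx : 0 < x := hy.trans_le hxy
  change _ = 7 / 32 * (1 / x - claytonHalf x y)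
  simp only [plcKernel, max_eq_left hxy, claytonHalfD₂_eq_claytonHalfD₁,
    claytonHalfD₁_self hx, claytonHalfD₁_self hy, claytonHalf_self hx.le, claytonHalf_comm y x]
  field_simp
  ring
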